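/- (Proposition 2) The relative error of the posterior mean satisfies ‖x_m − x*‖_{Σ₀⁻¹} ≤ √(tr(Σ_m Σ₀⁻¹)) · ‖x₀ − x*‖_{Σ₀⁻¹}, where ‖v‖_M = √(vᵀ M v). -/

import Mathlib

open Matrix

/-- The `M`-norm `‖v‖_M = √(vᵀ M v)` associated with a symmetric positive definite matrix. -/
noncomputable def matNorm {d : ℕ} (M : Matrix (Fin d) (Fin d) ℝ) (v : Fin d → ℝ) : ℝ :=
  Real.sqrt (v ⬝ᵥ (M *ᵥ v))

/-!
Write `e = x₀ - x*` and `P = Σ₀⁻¹`. The error of the posterior mean is `x_m - x* = Σ_m P e`, and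
`Σ_m P` is a projection (`Σ_m P Σ_m = Σ_m`), so `‖x_m - x*‖²_P = (P e)ᵀ Σ_m (P e)`. Factoring
`Σ_m = CᵀC` and `P = DᵀD`, this is `‖C Dᵀ (D e)‖² ≤ ‖C Dᵀ‖²_F ‖D e‖² = tr(Σ_m P) ‖e‖²_P`
by Cauchy–Schwarz.
-/

namespace Matrix

variable {ι κ n : Type*} [Fintype ι] [Fintype κ] [Fintype n]

theorem nonsing_inv_mul_mul_nonsing_inv [DecidableEq n] {R : Type*} [CommRing R]
    (A : Matrix n n R) : A⁻¹ * A * A⁻¹ = A⁻¹ := by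
  by_cases h : IsUnit A.det
  · rw [nonsing_inv_mul A h, Matrix.one_mul]
  · simp [nonsing_inv_apply_not_isUnit A h]

theorem mulVec_dotProduct_mulVec_mulVec (M : Matrix κ ι ℝ) (N : Matrix κ κ ℝ) (u : ι → ℝ) :
    (M *ᵥ u) ⬝ᵥ (N *ᵥ (M *ᵥ u)) = u ⬝ᵥ ((Mᵀ * N * M) *ᵥ u) := by
  rw [mulVec_mulVec, ← vecMul_transpose M, ← dotProduct_mulVec, mulVec_mulVec, Matrix.mul_assoc]

theorem dotProduct_mulVec_self_le_trace (C : Matrix κ ι ℝ) (v : ι → ℝ) :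
    (C *ᵥ v) ⬝ᵥ (C *ᵥ v) ≤ (Cᵀ * C).trace * (v ⬝ᵥ v) := by
  have htrace : (Cᵀ * C).trace = ∑ k, C k ⬝ᵥ C k := by
    simp only [trace, diag, mul_apply, transpose_apply, dotProduct]
    exact Finset.sum_comm
  rw [htrace, Finset.sum_mul]
  refine Finset.sum_le_sum fun k _ => ?_
  simpa only [mulVec, dotProduct, ← sq] using Finset.sum_mul_sq_le_sq_mul_sq Finset.univ (C k) v

theorem PosSemidef.exists_eq_transpose_mul_self {B : Matrix n n ℝ} (hB : B.PosSemidef) :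
    ∃ C : Matrix n n ℝ, B = Cᵀ * C := by
  classical
  open scoped MatrixOrder in
  simpa only [star_eq_conjTranspose, conjTranspose_eq_transpose_of_trivial] using
    CStarAlgebra.nonneg_iff_eq_star_mul_self.mp hB.nonneg

theorem PosSemidef.dotProduct_mulVec_mulVec_le_trace_mul {B P : Matrix n n ℝ}
    (hB : B.PosSemidef) (hP : P.PosSemidef) (v : n → ℝ) :
    (P *ᵥ v) ⬝ᵥ (B *ᵥ (P *ᵥ v)) ≤ (B * P).trace * (v ⬝ᵥ (P *ᵥ v)) := by
  obtain ⟨C, rfl⟩ := hB.exists_eq_transpose_mul_self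
  obtain ⟨D, rfl⟩ := hP.exists_eq_transpose_mul_self
  have hcs := dotProduct_mulVec_self_le_trace (C * Dᵀ) (D *ᵥ v)
  simp only [mulVec_mulVec, transpose_mul, transpose_transpose] at hcs
  convert hcs using 1
  · simp only [← mulVec_mulVec, dotProduct_mulVec, vecMul_transpose, Matrix.mul_assoc]
  · rw [← mulVec_mulVec, dotProduct_mulVec, vecMul_transpose]
    congr 1
    simp only [Matrix.mul_assoc]
    rw [trace_mul_comm D]
    simp only [Matrix.mul_assoc]

end Matrix

section Conditioning

variable {n m : Type*} [Fintype n] [Fintype m] [DecidableEq m]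

/- Conditioning the Gaussian prior `𝒩(x₀, Γ)` on the exact observation `G x = y`; the theorem is
the case `G = Sₘᵀ A`, `y = Sₘᵀ b`. -/

noncomputable def posteriorCov (Γ : Matrix n n ℝ) (G : Matrix m n ℝ) : Matrix n n ℝ :=
  Γ - Γ * Gᵀ * (G * Γ * Gᵀ)⁻¹ * G * Γ

noncomputable def posteriorMean (Γ : Matrix n n ℝ) (G : Matrix m n ℝ) (x₀ : n → ℝ) (y : m → ℝ) :
    n → ℝ :=
  x₀ + (Γ * Gᵀ * (G * Γ * Gᵀ)⁻¹) *ᵥ (y - G *ᵥ x₀)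

variable {Γ : Matrix n n ℝ} (G : Matrix m n ℝ)

theorem posteriorCov_mul_inv [DecidableEq n] (hΓ : IsUnit Γ.det) :
    posteriorCov Γ G * Γ⁻¹ = 1 - Γ * Gᵀ * (G * Γ * Gᵀ)⁻¹ * G := by
  rw [posteriorCov, sub_mul, mul_nonsing_inv Γ hΓ, mul_nonsing_inv_cancel_right _ _ hΓ]

theorem isIdempotentElem_posteriorCov_mul_inv [DecidableEq n] (hΓ : IsUnit Γ.det) :
    IsIdempotentElem (posteriorCov Γ G * Γ⁻¹) := by
  rw [posteriorCov_mul_inv G hΓ]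
  refine IsIdempotentElem.one_sub ?_
  calc Γ * Gᵀ * (G * Γ * Gᵀ)⁻¹ * G * (Γ * Gᵀ * (G * Γ * Gᵀ)⁻¹ * G)
      = Γ * Gᵀ * ((G * Γ * Gᵀ)⁻¹ * (G * Γ * Gᵀ) * (G * Γ * Gᵀ)⁻¹) * G := by
        simp only [Matrix.mul_assoc]
    _ = Γ * Gᵀ * (G * Γ * Gᵀ)⁻¹ * G := by rw [nonsing_inv_mul_mul_nonsing_inv]

theorem posteriorCov_mul_inv_mul_posteriorCov [DecidableEq n] (hΓ : IsUnit Γ.det) :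
    posteriorCov Γ G * Γ⁻¹ * posteriorCov Γ G = posteriorCov Γ G := by
  have hfactor : posteriorCov Γ G = posteriorCov Γ G * Γ⁻¹ * Γ :=
    (nonsing_inv_mul_cancel_right _ _ hΓ).symm
  nth_rewrite 2 [hfactor]
  rw [← Matrix.mul_assoc, (isIdempotentElem_posteriorCov_mul_inv G hΓ).eq]
  exact hfactor.symm

theorem transpose_posteriorCov (hΓ : Γᵀ = Γ) : (posteriorCov Γ G)ᵀ = posteriorCov Γ G := by
  simp only [posteriorCov, transpose_sub, transpose_mul, transpose_transpose, transpose_nonsing_inv,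
    hΓ, Matrix.mul_assoc]

theorem posSemidef_posteriorCov [DecidableEq n] (hΓ : Γ.PosDef) : (posteriorCov Γ G).PosSemidef := by
  have hdet := (isUnit_iff_isUnit_det Γ).mp hΓ.isUnit
  have hsymm : (posteriorCov Γ G)ᴴ = posteriorCov Γ G := by
    rw [conjTranspose_eq_transpose_of_trivial]
    exact transpose_posteriorCov G (by simpa using hΓ.isHermitian.eq)
  simpa only [hsymm, posteriorCov_mul_inv_mul_posteriorCov G hdet] using
    hΓ.inv.posSemidef.mul_mul_conjTranspose_same (posteriorCov Γ G)

theorem posteriorMean_sub [DecidableEq n] (hΓ : IsUnit Γ.det) (x₀ x : n → ℝ) :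
    posteriorMean Γ G x₀ (G *ᵥ x) - x = (posteriorCov Γ G * Γ⁻¹) *ᵥ (x₀ - x) := by
  rw [posteriorCov_mul_inv G hΓ, posteriorMean, ← mulVec_sub, ← neg_sub x₀ x, mulVec_neg,
    mulVec_neg, mulVec_mulVec, sub_mulVec, one_mulVec]
  abel

theorem posteriorMean_sub_dotProduct_le [DecidableEq n] (hΓ : Γ.PosDef) (x₀ x : n → ℝ) :
    (posteriorMean Γ G x₀ (G *ᵥ x) - x) ⬝ᵥ (Γ⁻¹ *ᵥ (posteriorMean Γ G x₀ (G *ᵥ x) - x)) ≤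
      (posteriorCov Γ G * Γ⁻¹).trace * ((x₀ - x) ⬝ᵥ (Γ⁻¹ *ᵥ (x₀ - x))) := by
  have hdet := (isUnit_iff_isUnit_det Γ).mp hΓ.isUnit
  have hsymm : Γᵀ = Γ := by simpa using hΓ.isHermitian.eq
  have hinv_symm : Γ⁻¹ᵀ = Γ⁻¹ := by rw [transpose_nonsing_inv, hsymm]
  set Γm := posteriorCov Γ G
  have hquad : ((Γm * Γ⁻¹) *ᵥ (x₀ - x)) ⬝ᵥ (Γ⁻¹ *ᵥ ((Γm * Γ⁻¹) *ᵥ (x₀ - x))) =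
      (Γ⁻¹ *ᵥ (x₀ - x)) ⬝ᵥ (Γm *ᵥ (Γ⁻¹ *ᵥ (x₀ - x))) := by
    rw [mulVec_dotProduct_mulVec_mulVec, mulVec_dotProduct_mulVec_mulVec, transpose_mul,
      transpose_posteriorCov G hsymm, hinv_symm]
    congr 2
    calc Γ⁻¹ * Γm * Γ⁻¹ * (Γm * Γ⁻¹) = Γ⁻¹ * (Γm * Γ⁻¹ * Γm) * Γ⁻¹ := by
          simp only [Matrix.mul_assoc]
      _ = Γ⁻¹ * Γm * Γ⁻¹ := by rw [posteriorCov_mul_inv_mul_posteriorCov G hdet]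
  rw [posteriorMean_sub G hdet, hquad]
  exact (posSemidef_posteriorCov G hΓ).dotProduct_mulVec_mulVec_le_trace_mul hΓ.inv.posSemidef _

end Conditioning

theorem posterior_mean_relative_error_bound_general
    (d m : ℕ)
    (A : Matrix (Fin d) (Fin d) ℝ) (hA : IsUnit A)
    (b : Fin d → ℝ) (xstar : Fin d → ℝ) (hxstar : xstar = A⁻¹ *ᵥ b)
    (Sigma0 : Matrix (Fin d) (Fin d) ℝ) (hSigma0 : Sigma0.PosDef)
    (x0 : Fin d → ℝ)
    (S : Matrix (Fin d) (Fin m) ℝ)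
    (Λm : Matrix (Fin m) (Fin m) ℝ) (hΛm : Λm = Sᵀ * A * Sigma0 * Aᵀ * S)
    (r0 : Fin d → ℝ) (hr0 : r0 = b - A *ᵥ x0)
    (xm : Fin d → ℝ) (hxm : xm = x0 + (Sigma0 * Aᵀ * S * Λm⁻¹ * Sᵀ) *ᵥ r0)
    (Sigmam : Matrix (Fin d) (Fin d) ℝ)
    (hSigmam : Sigmam = Sigma0 - Sigma0 * Aᵀ * S * Λm⁻¹ * Sᵀ * A * Sigma0) :
    matNorm Sigma0⁻¹ (xm - xstar) ≤
      Real.sqrt ((Sigmam * Sigma0⁻¹).trace) * matNorm Sigma0⁻¹ (x0 - xstar) := by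
  have hAx : A *ᵥ xstar = b := by
    rw [hxstar, mulVec_mulVec, mul_nonsing_inv A ((isUnit_iff_isUnit_det A).mp hA), one_mulVec]
  have hxm' : xm = posteriorMean Sigma0 (Sᵀ * A) x0 ((Sᵀ * A) *ᵥ xstar) := by
    rw [hxm, hr0, hΛm, ← hAx, posteriorMean]
    simp only [transpose_mul, transpose_transpose, mulVec_sub, mulVec_mulVec, Matrix.mul_assoc]
  have hSigmam' : Sigmam = posteriorCov Sigma0 (Sᵀ * A) := by
    rw [hSigmam, hΛm, posteriorCov]
    simp only [transpose_mul, transpose_transpose, Matrix.mul_assoc]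
  have herr_nonneg : 0 ≤ (x0 - xstar) ⬝ᵥ (Sigma0⁻¹ *ᵥ (x0 - xstar)) := by
    simpa using hSigma0.inv.posSemidef.dotProduct_mulVec_nonneg (x0 - xstar)
  rw [hxm', hSigmam', matNorm, matNorm, ← Real.sqrt_mul' _ herr_nonneg]
  exact Real.sqrt_le_sqrt (posteriorMean_sub_dotProduct_le _ hSigma0 x0 xstar)

/-- **Proposition 2.** The relative error of the posterior mean satisfies
`‖x_m − x*‖_{Σ₀⁻¹} ≤ √(tr(Σ_m Σ₀⁻¹)) ⬝ ‖x₀ − x*‖_{Σ₀⁻¹}`. -/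
theorem posterior_mean_relative_error_bound
    (d m : ℕ) (hm : m ≤ d)
    (A : Matrix (Fin d) (Fin d) ℝ) (hA : IsUnit A)
    (b : Fin d → ℝ) (xstar : Fin d → ℝ) (hxstar : xstar = A⁻¹ *ᵥ b)
    (Sigma0 : Matrix (Fin d) (Fin d) ℝ) (hSigma0 : Sigma0.PosDef)
    (x0 : Fin d → ℝ)
    (S : Matrix (Fin d) (Fin m) ℝ)
    (hS : LinearIndependent ℝ (fun j : Fin m => fun i : Fin d => S i j))
    (Λm : Matrix (Fin m) (Fin m) ℝ) (hΛm : Λm = Sᵀ * A * Sigma0 * Aᵀ * S)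
    (r0 : Fin d → ℝ) (hr0 : r0 = b - A *ᵥ x0)
    (xm : Fin d → ℝ) (hxm : xm = x0 + (Sigma0 * Aᵀ * S * Λm⁻¹ * Sᵀ) *ᵥ r0)
    (Sigmam : Matrix (Fin d) (Fin d) ℝ)
    (hSigmam : Sigmam = Sigma0 - Sigma0 * Aᵀ * S * Λm⁻¹ * Sᵀ * A * Sigma0) :
    matNorm Sigma0⁻¹ (xm - xstar) ≤
      Real.sqrt ((Sigmam * Sigma0⁻¹).trace) * matNorm Sigma0⁻¹ (x0 - xstar) :=
  posterior_mean_relative_error_bound_general d m A hA b xstar hxstar Sigma0 hSigma0 x0 S Λm hΛm r0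
    hr0 xm hxm Sigmam hSigmam
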